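/- Let ℱ be a nonempty closed convex set of free states, 𝔉 a set of channels each of which maps ℱ into ℱ, and assume that for every σ ∈ ℱ the replacement channel τ ↦ Tr(τ)σ belongs to 𝔉. Then for every channel N and every probe state ρ ∈ D(H), the success probability of discriminating N from 𝔉 with probe state ρ is bounded as p_succ(N, 𝔉, ρ) ≤ 1/2 + (1/2)·Ω₁(N) + (1/2)·ω₁(ρ). -/

import Mathlib

open scoped Kronecker ComplexOrder

variable {ι : Type*} [Fintype ι] [DecidableEq ι]

/-- A quantum state: positive semidefinite matrix of trace one. -/
def IsState (ρ : Matrix ι ι ℂ) : Prop := ρ.PosSemidef ∧ ρ.trace = 1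

/-- The action of `id_n ⊗ N` on block matrices. -/
def idTensorMap (n : ℕ) (N : Matrix ι ι ℂ →ₗ[ℂ] Matrix ι ι ℂ)
    (M : Matrix (Fin n × ι) (Fin n × ι) ℂ) : Matrix (Fin n × ι) (Fin n × ι) ℂ :=
  Matrix.of fun p q => N (Matrix.of fun k l => M (p.1, k) (q.1, l)) p.2 q.2

/-- A quantum channel: completely positive trace preserving linear map. -/
structure Channel (ι : Type*) [Fintype ι] [DecidableEq ι] where
  map : Matrix ι ι ℂ →ₗ[ℂ] Matrix ι ι ℂ
  cp : ∀ (n : ℕ) (M : Matrix (Fin n × ι) (Fin n × ι) ℂ), M.PosSemidef →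
        (idTensorMap n map M).PosSemidef
  tp : ∀ A : Matrix ι ι ℂ, (map A).trace = A.trace

/-- The trace norm ‖A‖₁ = Tr √(AᴴA). -/
noncomputable def traceNorm (A : Matrix ι ι ℂ) : ℝ :=
  (((Matrix.posSemidef_conjTranspose_mul_self A).1.eigenvectorUnitary : Matrix ι ι ℂ) *
      Matrix.diagonal (((↑) : ℝ → ℂ) ∘ (√· : ℝ → ℝ) ∘ (Matrix.posSemidef_conjTranspose_mul_self A).1.eigenvalues) *
      (star (Matrix.posSemidef_conjTranspose_mul_self A).1.eigenvectorUnitary : Matrix ι ι ℂ)).trace.re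

/-- Trace-norm resource measure ω₁. -/
noncomputable def omega1 (F : Set (Matrix ι ι ℂ)) (ρ : Matrix ι ι ℂ) : ℝ :=
  (1/2) * sInf ((fun σ => traceNorm (ρ - σ)) '' F)

/-- Trace-norm resource generating power Ω₁. -/
noncomputable def genPower1 (F : Set (Matrix ι ι ℂ)) (N : Matrix ι ι ℂ → Matrix ι ι ℂ) : ℝ :=
  sSup ((fun ρ => omega1 F (N ρ)) '' F)

/-- Trace-norm resource increasing power Ω̃₁. -/
noncomputable def incPower1 (F : Set (Matrix ι ι ℂ)) (N : Matrix ι ι ℂ → Matrix ι ι ℂ) : ℝ :=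
  sSup ((fun ρ => omega1 F (N ρ) - omega1 F ρ) '' {ρ | IsState ρ})

/-- Holevo–Helstrom success probability of discriminating two channels with probe `ρ`. -/
noncomputable def psuccPair (N M : Matrix ι ι ℂ → Matrix ι ι ℂ) (ρ : Matrix ι ι ℂ) : ℝ :=
  1/2 + (1/4) * traceNorm (N ρ - M ρ)

/-- Success probability of discriminating `N` from the set of channels `Free` with probe `ρ`. -/
noncomputable def psuccChan (N : Matrix ι ι ℂ → Matrix ι ι ℂ) (Free : Set (Channel ι))
    (ρ : Matrix ι ι ℂ) : ℝ :=
  sInf ((fun M : Channel ι => psuccPair N (⇑M.map) ρ) '' Free)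

/-- Maximum success probability of discriminating `N` from `Free` using probes from `F`. -/
noncomputable def psuccFF (N : Matrix ι ι ℂ → Matrix ι ι ℂ) (Free : Set (Channel ι))
    (F : Set (Matrix ι ι ℂ)) : ℝ :=
  sSup ((fun ρ => psuccChan N Free ρ) '' F)

/-!
Fix `σ, σ' ∈ ℱ` and let `M` be the replacement channel onto `σ'`. As `M ρ = σ'`, the Helstrom
bound gives `p_succ ≤ 1/2 + ‖N ρ - σ'‖₁ / 4`, and the triangle inequality together with the
contractivity of the trace norm under channels gives `‖N ρ - σ'‖₁ ≤ ‖ρ - σ‖₁ + ‖N σ - σ'‖₁`.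
Minimising over `σ'` bounds the last term by `2 ω₁(N σ) ≤ 2 Ω₁(N)`, and then minimising over `σ`
bounds the first one by `2 ω₁(ρ)`.

Both trace-norm facts reduce to `‖X - Y‖₁ ≤ Tr X + Tr Y` for positive `X, Y`, which follows from
`‖A‖₁ = Tr (sign A * A)` and `-1 ≤ sign A ≤ 1`.
-/

open Matrix
open scoped MatrixOrder

lemma Matrix.PosSemidef.trace_mul_nonneg {𝕜 n : Type*} [RCLike 𝕜] [Fintype n] [DecidableEq n]
    {A B : Matrix n n 𝕜} (hA : A.PosSemidef) (hB : B.PosSemidef) : 0 ≤ (A * B).trace := by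
  obtain ⟨C, rfl⟩ := CStarAlgebra.nonneg_iff_eq_star_mul_self.mp hB.nonneg
  rw [← Matrix.mul_assoc, trace_mul_cycle, star_eq_conjTranspose]
  exact (hA.mul_mul_conjTranspose_same C).trace_nonneg

lemma Matrix.IsHermitian.cfcAbs_eq_cfc_sign_mul {𝕜 n : Type*} [RCLike 𝕜] [Fintype n]
    [DecidableEq n] {A : Matrix n n 𝕜} (hA : A.IsHermitian) :
    CFC.abs A = cfc Real.sign A * A := by
  have hsign : (fun x : ℝ => ‖x‖) = fun x => Real.sign x * x := by
    ext x
    rw [Real.norm_eq_abs]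
    rcases lt_trichotomy x 0 with h | rfl | h
    · simp [Real.sign_of_neg h, abs_of_neg h]
    · simp
    · simp [Real.sign_of_pos h, abs_of_pos h]
  rw [CFC.abs_eq_cfc_norm A hA, hsign,
    cfc_mul Real.sign (fun x => x) A (A.finite_real_spectrum.continuousOn _), cfc_id' ℝ A]

lemma Matrix.PosSemidef.abs_re_trace_cfc_sign_mul_le (A : Matrix ι ι ℂ) {X : Matrix ι ι ℂ}
    (hX : X.PosSemidef) : |(cfc Real.sign A * X).trace.re| ≤ X.trace.re := by
  have hsign_le_one : ∀ x : ℝ, Real.sign x ≤ 1 ∧ -Real.sign x ≤ 1 := fun x => by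
    rcases Real.sign_apply_eq x with h | h | h <;> rw [h] <;> norm_num
  have hle : cfc Real.sign A ≤ 1 := cfc_le_one _ A fun x _ => (hsign_le_one x).1
  have hge : -1 ≤ cfc Real.sign A :=
    neg_le.mpr (cfc_neg Real.sign A ▸ cfc_le_one _ A fun x _ => (hsign_le_one x).2)
  have h₁ := (Complex.nonneg_iff.mp (trace_mul_nonneg (le_iff.mp hle) hX)).1
  have h₂ := (Complex.nonneg_iff.mp (trace_mul_nonneg (le_iff.mp hge) hX)).1
  rw [Matrix.sub_mul, Matrix.one_mul, trace_sub, Complex.sub_re] at h₁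
  rw [sub_neg_eq_add, Matrix.add_mul, Matrix.one_mul, trace_add, Complex.add_re] at h₂
  exact abs_le.mpr ⟨by linarith, by linarith⟩

lemma traceNorm_eq_re_trace_cfcAbs (A : Matrix ι ι ℂ) : traceNorm A = (CFC.abs A).trace.re := by
  rw [CFC.abs, CFC.sqrt_eq_real_sqrt _ (star_mul_self_nonneg A), cfcₙ_eq_cfc,
    star_eq_conjTranspose, (posSemidef_conjTranspose_mul_self A).1.cfc_eq, IsHermitian.cfc,
    Unitary.conjStarAlgAut_apply]
  rfl

lemma traceNorm_nonneg (A : Matrix ι ι ℂ) : 0 ≤ traceNorm A := by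
  rw [traceNorm_eq_re_trace_cfcAbs]
  exact (Complex.nonneg_iff.mp (CFC.abs_nonneg A).posSemidef.trace_nonneg).1

lemma Matrix.IsHermitian.traceNorm_eq_re_trace_posPart_add_negPart {A : Matrix ι ι ℂ}
    (hA : A.IsHermitian) : traceNorm A = (A⁺).trace.re + (A⁻).trace.re := by
  rw [traceNorm_eq_re_trace_cfcAbs, ← CFC.posPart_add_negPart A hA, trace_add, Complex.add_re]

lemma Matrix.PosSemidef.traceNorm_sub_le {X Y : Matrix ι ι ℂ} (hX : X.PosSemidef)
    (hY : Y.PosSemidef) : traceNorm (X - Y) ≤ X.trace.re + Y.trace.re := by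
  rw [traceNorm_eq_re_trace_cfcAbs, (hX.1.sub hY.1).cfcAbs_eq_cfc_sign_mul, Matrix.mul_sub,
    trace_sub, Complex.sub_re]
  have hX' := hX.abs_re_trace_cfc_sign_mul_le (X - Y)
  have hY' := hY.abs_re_trace_cfc_sign_mul_le (X - Y)
  linarith [le_abs_self (cfc Real.sign (X - Y) * X).trace.re,
    neg_abs_le (cfc Real.sign (X - Y) * Y).trace.re]

lemma Matrix.IsHermitian.traceNorm_add_le {A B : Matrix ι ι ℂ} (hA : A.IsHermitian)
    (hB : B.IsHermitian) : traceNorm (A + B) ≤ traceNorm A + traceNorm B := by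
  have hsplit : A + B = (A⁺ + B⁺) - (A⁻ + B⁻) := by
    conv_lhs => rw [← CFC.posPart_sub_negPart A hA, ← CFC.posPart_sub_negPart B hB]
    abel
  have hpos := (CFC.posPart_nonneg A).posSemidef.add (CFC.posPart_nonneg B).posSemidef
  have hneg := (CFC.negPart_nonneg A).posSemidef.add (CFC.negPart_nonneg B).posSemidef
  have h := hpos.traceNorm_sub_le hneg
  rw [← hsplit, trace_add, trace_add, Complex.add_re, Complex.add_re] at h
  rw [hA.traceNorm_eq_re_trace_posPart_add_negPart, hB.traceNorm_eq_re_trace_posPart_add_negPart]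
  linarith

namespace Channel

lemma map_posSemidef (N : Channel ι) {X : Matrix ι ι ℂ} (hX : X.PosSemidef) :
    (N.map X).PosSemidef := by
  have h := N.cp 1 (X.submatrix Prod.snd Prod.snd) (hX.submatrix _)
  exact h.submatrix (fun i => ((0 : Fin 1), i))

lemma isState_map (N : Channel ι) {ρ : Matrix ι ι ℂ} (hρ : IsState ρ) : IsState (N.map ρ) :=
  ⟨N.map_posSemidef hρ.1, by rw [N.tp, hρ.2]⟩

lemma traceNorm_map_le (N : Channel ι) {A : Matrix ι ι ℂ} (hA : A.IsHermitian) :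
    traceNorm (N.map A) ≤ traceNorm A := by
  have h := (N.map_posSemidef (CFC.posPart_nonneg A).posSemidef).traceNorm_sub_le
    (N.map_posSemidef (CFC.negPart_nonneg A).posSemidef)
  rwa [← map_sub, CFC.posPart_sub_negPart A hA, N.tp, N.tp,
    ← hA.traceNorm_eq_re_trace_posPart_add_negPart] at h

end Channel

lemma IsState.traceNorm_sub_le_two {ρ σ : Matrix ι ι ℂ} (hρ : IsState ρ) (hσ : IsState σ) :
    traceNorm (ρ - σ) ≤ 2 := by
  have h := hρ.1.traceNorm_sub_le hσ.1
  rw [hρ.2, hσ.2, Complex.one_re] at h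
  linarith

section Discrimination

variable {F : Set (Matrix ι ι ℂ)}

lemma omega1_le_half_traceNorm_sub {σ : Matrix ι ι ℂ} (hσ : σ ∈ F) (τ : Matrix ι ι ℂ) :
    omega1 F τ ≤ traceNorm (τ - σ) / 2 := by
  have h := csInf_le ⟨0, Set.forall_mem_image.2 fun σ _ => traceNorm_nonneg (τ - σ)⟩
    (Set.mem_image_of_mem (fun σ => traceNorm (τ - σ)) hσ)
  rw [omega1]
  linarith

lemma le_two_mul_omega1 (hF : F.Nonempty) {τ : Matrix ι ι ℂ} {c : ℝ}
    (h : ∀ σ ∈ F, c ≤ traceNorm (τ - σ)) : c ≤ 2 * omega1 F τ := by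
  have := le_csInf (hF.image _) (Set.forall_mem_image.2 h)
  rw [omega1]
  linarith

lemma omega1_map_le_genPower1 (hFstate : ∀ ρ ∈ F, IsState ρ) (N : Channel ι)
    {σ : Matrix ι ι ℂ} (hσ : σ ∈ F) : omega1 F (N.map σ) ≤ genPower1 F N.map := by
  refine le_csSup ⟨1, Set.forall_mem_image.2 fun τ hτ => ?_⟩ (Set.mem_image_of_mem _ hσ)
  have := (N.isState_map (hFstate τ hτ)).traceNorm_sub_le_two (hFstate σ hσ)
  linarith [omega1_le_half_traceNorm_sub hσ (N.map τ)]

lemma psuccChan_le_psuccPair (N : Matrix ι ι ℂ → Matrix ι ι ℂ) {Free : Set (Channel ι)}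
    {M : Channel ι} (hM : M ∈ Free) (ρ : Matrix ι ι ℂ) :
    psuccChan N Free ρ ≤ psuccPair N M.map ρ := by
  refine csInf_le ⟨1/2, Set.forall_mem_image.2 fun M' _ => ?_⟩ (Set.mem_image_of_mem _ hM)
  have := traceNorm_nonneg (N ρ - M'.map ρ)
  simp only [psuccPair]
  linarith

end Discrimination

theorem stmt9_general
    (F : Set (Matrix ι ι ℂ)) (hFne : F.Nonempty) (hFstate : ∀ ρ ∈ F, IsState ρ)
    (Free : Set (Channel ι))
    (hRepl : ∀ σ ∈ F, ∃ M ∈ Free, ∀ τ : Matrix ι ι ℂ, M.map τ = τ.trace • σ)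
    (N : Channel ι) (ρ : Matrix ι ι ℂ) (hρ : IsState ρ) :
    psuccChan (⇑N.map) Free ρ
      ≤ 1/2 + (1/2) * genPower1 F (⇑N.map) + (1/2) * omega1 F ρ := by
  set p := psuccChan (⇑N.map) Free ρ
  have hreplace : ∀ σ ∈ F, ∀ σ' ∈ F,
      4 * (p - 1/2) - traceNorm (ρ - σ) ≤ traceNorm (N.map σ - σ') := by
    intro σ hσ σ' hσ'
    obtain ⟨M, hM, hMσ'⟩ := hRepl σ' hσ'
    have hp := psuccChan_le_psuccPair N.map hM ρ
    rw [psuccPair, hMσ', hρ.2, one_smul] at hp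
    have hNσ := (N.isState_map (hFstate σ hσ)).1.1
    have htri := ((N.isState_map hρ).1.1.sub hNσ).traceNorm_add_le (hNσ.sub (hFstate σ' hσ').1.1)
    rw [sub_add_sub_cancel] at htri
    have hcontract := N.traceNorm_map_le (hρ.1.1.sub (hFstate σ hσ).1.1)
    rw [map_sub] at hcontract
    linarith
  have hprobe : ∀ σ ∈ F, 4 * (p - 1/2) - 2 * genPower1 F N.map ≤ traceNorm (ρ - σ) := fun σ hσ => by
    have := le_two_mul_omega1 hFne (hreplace σ hσ)
    linarith [omega1_map_le_genPower1 hFstate N hσ]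
  linarith [le_two_mul_omega1 hFne hprobe]

/-- the success probability of discriminating `N` from the free channels with any
probe state `ρ` is bounded by `1/2 + Ω₁(N)/2 + ω₁(ρ)/2`. -/
theorem stmt9
    (F : Set (Matrix ι ι ℂ)) (hFne : F.Nonempty) (hFstate : ∀ ρ ∈ F, IsState ρ)
    (hFconv : Convex ℝ F) (hFclosed : IsClosed F)
    (Free : Set (Channel ι))
    (hFree : ∀ M ∈ Free, ∀ ρ ∈ F, M.map ρ ∈ F)
    (hRepl : ∀ σ ∈ F, ∃ M ∈ Free, ∀ τ : Matrix ι ι ℂ, M.map τ = τ.trace • σ)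
    (N : Channel ι) (ρ : Matrix ι ι ℂ) (hρ : IsState ρ) :
    psuccChan (⇑N.map) Free ρ
      ≤ 1/2 + (1/2) * genPower1 F (⇑N.map) + (1/2) * omega1 F ρ :=
  stmt9_general F hFne hFstate Free hRepl N ρ hρ
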